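/- The crease pattern γ is a unit-speed plane curve whose curvature equals the geodesic curvature of the crease: ‖γ′(s)‖ = 1 for all s ∈ [0,L], and for all s ∈ (0,L), ‖γ″(s)‖ = −ζ″(s)/√(1 − ζ′(s)²) > 0, and this quantity equals κ_g(s) := ⟨c″(s), n_g(s)⟩, where n_g(s) := (σ(s)ζ′(s), ζ′(s)², −1 + ζ′(s)²)/√(1 − ζ′(s)²). -/

import Mathlib

open Real Set

noncomputable section

/-- Euclidean 3-space. -/
abbrev E3 : Type := EuclideanSpace ℝ (Fin 3)

/-- The vector `(x, y, z)` in `ℝ³`. -/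
def v3 (x y z : ℝ) : E3 := WithLp.toLp 2 ![x, y, z]

/-- The cross product in `ℝ³`. -/
def cross3 (u w : E3) : E3 :=
  v3 (u 1 * w 2 - u 2 * w 1) (u 2 * w 0 - u 0 * w 2) (u 0 * w 1 - u 1 * w 0)

/-- `σ(s) = √(1 − 2 ζ′(s)²)`. -/
def sig (ζ : ℝ → ℝ) (s : ℝ) : ℝ := Real.sqrt (1 - 2 * (deriv ζ s) ^ 2)

/-- The crease `c(s) = (∫₀ˢ σ(w) dw, ζ(s), ζ(s))`. -/
def crease (ζ : ℝ → ℝ) (s : ℝ) : E3 :=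
  v3 (∫ w in (0:ℝ)..s, sig ζ w) (ζ s) (ζ s)

/-- The crease pattern `γ(s) = (∫₀ˢ √(1 − ζ′(w)²) dw, ζ(s), 0)`. -/
def pattern (ζ : ℝ → ℝ) (s : ℝ) : E3 :=
  v3 (∫ w in (0:ℝ)..s, Real.sqrt (1 - (deriv ζ w) ^ 2)) (ζ s) 0

/-- The curvature `κ(s) = ‖c″(s)‖` of a space curve. -/
def curv (c : ℝ → E3) (s : ℝ) : ℝ := ‖deriv (deriv c) s‖

/-- The principal normal `N(s) = c″(s)/κ(s)` of a space curve. -/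
def nvec (c : ℝ → E3) (s : ℝ) : E3 := (curv c s)⁻¹ • deriv (deriv c) s

/-- The binormal `B(s) = c′(s) × N(s)` of a space curve. -/
def bvec (c : ℝ → E3) (s : ℝ) : E3 := cross3 (deriv c s) (nvec c s)

lemma norm_v3 (x y z : ℝ) : ‖v3 x y z‖ = Real.sqrt (x^2 + y^2 + z^2) := by
  rw [EuclideanSpace.norm_eq]
  congr 1
  simp [v3, Fin.sum_univ_three, sq_abs]

lemma inner_v3 (a b c x y z : ℝ) :
    (inner ℝ (v3 a b c) (v3 x y z) : ℝ) = a*x + b*y + c*z := by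
  simp [v3, PiLp.inner_apply, Fin.sum_univ_three]
  ring

lemma hasDerivAt_v3 {f g h : ℝ → ℝ} {f' g' h' s : ℝ}
    (hf : HasDerivAt f f' s) (hg : HasDerivAt g g' s) (hh : HasDerivAt h h' s) :
    HasDerivAt (fun t => v3 (f t) (g t) (h t)) (v3 f' g' h') s := by
  have H : HasDerivAt (fun t => (![f t, g t, h t] : Fin 3 → ℝ)) ![f', g', h'] s := by
    rw [hasDerivAt_pi]
    intro i
    fin_cases i <;> simpa
  exact ((PiLp.continuousLinearEquiv 2 ℝ
    (fun _ : Fin 3 => ℝ)).symm.toContinuousLinearMap.hasFDerivAt.comp_hasDerivAt s H :)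

/-- the crease pattern `γ` is a unit-speed plane curve whose curvature
`−ζ″/√(1−ζ′²) > 0` equals the geodesic curvature `κ_g = ⟨c″, n_g⟩` of the crease. -/
theorem pattern_curvature_eq_geodesic_curvature
    (b L : ℝ) (hb : 0 < b) (hL : 0 < L) (ζ : ℝ → ℝ) (hζ : ContDiff ℝ (⊤ : ℕ∞) ζ)
    (hζ0 : ζ 0 = 0) (hζL : ζ L = 0)
    (hslope : ∀ s ∈ Set.Icc (0:ℝ) L, 0 < 1 - 2 * (deriv ζ s) ^ 2)
    (hrange : ∀ s ∈ Set.Ioo (0:ℝ) L, 0 < ζ s ∧ ζ s < b)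
    (hconc : ∀ s ∈ Set.Ioo (0:ℝ) L, deriv (deriv ζ) s < 0) :
    (∀ s ∈ Set.Icc (0:ℝ) L, ‖deriv (pattern ζ) s‖ = 1) ∧
    (∀ s ∈ Set.Ioo (0:ℝ) L,
      ‖deriv (deriv (pattern ζ)) s‖
        = -(deriv (deriv ζ) s) / Real.sqrt (1 - (deriv ζ s) ^ 2) ∧
      0 < ‖deriv (deriv (pattern ζ)) s‖ ∧
      ‖deriv (deriv (pattern ζ)) s‖
        = (inner ℝ (deriv (deriv (crease ζ)) s)
            ((Real.sqrt (1 - (deriv ζ s) ^ 2))⁻¹ •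
              v3 (sig ζ s * deriv ζ s) ((deriv ζ s) ^ 2) (-1 + (deriv ζ s) ^ 2)) : ℝ)) := by
  set p := deriv ζ with hp_def
  set q := deriv (deriv ζ) with hq_def
  have hζd : Differentiable ℝ ζ := hζ.differentiable (by simp)
  have hzi : ContDiff ℝ ((⊤ : ℕ∞) : WithTop ℕ∞) ζ := hζ.of_le (by simp)
  have hpCD := (contDiff_infty_iff_deriv.mp hzi).2
  have hpd : Differentiable ℝ p := hpCD.differentiable (by simp)
  have hpc : Continuous p := hpd.continuous
  have hζ' : ∀ s, HasDerivAt ζ (p s) s := fun s => (hζd s).hasDerivAt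
  have hp' : ∀ s, HasDerivAt p (q s) s := fun s => (hpd s).hasDerivAt
  -- first derivative of pattern
  have hrc : Continuous fun s => Real.sqrt (1 - p s ^ 2) :=
    (continuous_const.sub (hpc.pow 2)).sqrt
  have hγ' : ∀ s, HasDerivAt (pattern ζ) (v3 (Real.sqrt (1 - p s ^ 2)) (p s) 0) s := by
    intro s
    exact hasDerivAt_v3 ((hrc.integral_hasStrictDerivAt 0 s).hasDerivAt) (hζ' s)
      (hasDerivAt_const s 0)
  have hdγ : deriv (pattern ζ) = fun s => v3 (Real.sqrt (1 - p s ^ 2)) (p s) 0 :=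
    funext fun s => (hγ' s).deriv
  -- first derivative of crease
  have hsc : Continuous (sig ζ) := (continuous_const.sub (continuous_const.mul (hpc.pow 2))).sqrt
  have hc' : ∀ s, HasDerivAt (crease ζ) (v3 (sig ζ s) (p s) (p s)) s := by
    intro s
    exact hasDerivAt_v3 ((hsc.integral_hasStrictDerivAt 0 s).hasDerivAt) (hζ' s) (hζ' s)
  have hdc : deriv (crease ζ) = fun s => v3 (sig ζ s) (p s) (p s) :=
    funext fun s => (hc' s).deriv
  have hsq : ∀ s ∈ Set.Icc (0:ℝ) L, p s ^ 2 < 1 := by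
    intro s hs
    have := hslope s hs
    nlinarith
  constructor
  · intro s hs
    rw [hdγ, norm_v3, Real.sq_sqrt (by nlinarith [hsq s hs])]
    rw [show 1 - p s ^ 2 + p s ^ 2 + (0:ℝ)^2 = 1 by ring, Real.sqrt_one]
  · intro s hs
    have hsIcc : s ∈ Set.Icc (0:ℝ) L := ⟨hs.1.le, hs.2.le⟩
    have h1p : 0 < 1 - p s ^ 2 := by nlinarith [hsq s hsIcc]
    have h2p : 0 < 1 - 2 * p s ^ 2 := hslope s hsIcc
    have hq0 : q s < 0 := hconc s hs
    set r := Real.sqrt (1 - p s ^ 2) with hr_def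
    have hr : 0 < r := Real.sqrt_pos.mpr h1p
    have hr2 : r ^ 2 = 1 - p s ^ 2 := Real.sq_sqrt h1p.le
    set σ := sig ζ s with hσ_def
    have hσ : 0 < σ := Real.sqrt_pos.mpr h2p
    have hσ2 : σ ^ 2 = 1 - 2 * p s ^ 2 := Real.sq_sqrt h2p.le
    -- second derivative of pattern
    have hsqrt' : HasDerivAt (fun u => Real.sqrt (1 - p u ^ 2))
        ((0 - (2 : ℕ) * p s ^ 1 * q s) / (2 * r)) s :=
      HasDerivAt.sqrt ((hasDerivAt_const s 1).sub ((hp' s).pow 2)) h1p.ne'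
    have hγ'' : deriv (deriv (pattern ζ)) s
        = v3 ((0 - (2 : ℕ) * p s ^ 1 * q s) / (2 * r)) (q s) 0 := by
      rw [hdγ]
      exact (hasDerivAt_v3 hsqrt' (hp' s) (hasDerivAt_const s 0)).deriv
    have key : ‖deriv (deriv (pattern ζ)) s‖ = -(q s) / r := by
      rw [hγ'', norm_v3]
      have : ((0 - (2 : ℕ) * p s ^ 1 * q s) / (2 * r)) ^ 2 + q s ^ 2 + (0:ℝ) ^ 2
          = (-(q s) / r) ^ 2 := by
        field_simp
        linear_combination (4 * q s ^ 2) * hr2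
      rw [this, Real.sqrt_sq (div_nonneg (neg_nonneg.2 hq0.le) hr.le)]
    have hpos : 0 < -(q s) / r := div_pos (neg_pos.2 hq0) hr
    refine ⟨key, key ▸ hpos, ?_⟩
    -- second derivative of crease
    have hsig' : HasDerivAt (sig ζ)
        ((0 - 2 * ((2 : ℕ) * p s ^ 1 * q s)) / (2 * σ)) s :=
      HasDerivAt.sqrt ((hasDerivAt_const s 1).sub (((hp' s).pow 2).const_mul 2)) h2p.ne'
    have hc'' : deriv (deriv (crease ζ)) s
        = v3 ((0 - 2 * ((2 : ℕ) * p s ^ 1 * q s)) / (2 * σ)) (q s) (q s) := by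
      rw [hdc]
      exact (hasDerivAt_v3 hsig' (hp' s) (hp' s)).deriv
    rw [key, hc'', real_inner_smul_right, inner_v3]
    rw [show (0 - 2 * ((2 : ℕ) * p s ^ 1 * q s)) / (2 * σ) * (σ * p s)
        = -2 * p s ^ 2 * q s by field_simp; ring]
    rw [show -2 * p s ^ 2 * q s + q s * p s ^ 2 + q s * (-1 + p s ^ 2) = -(q s) by ring]
    rw [div_eq_inv_mul]
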